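/- Let L denote the Rogers dilogarithm and let ρ be the unique real number with 0 < ρ < 1 satisfying 1 − ρ² = ρ³ (so ρ is the reciprocal of the plastic constant). Then L(ρ²) + 2·L(ρ) = π²/3. -/

import Mathlib

open Real Filter Set Topology

/-- The real dilogarithm `Li₂(z) = ∑_{n=1}^∞ zⁿ/n²`. -/
noncomputable def dilog (z : ℝ) : ℝ := ∑' n : ℕ, z ^ (n + 1) / ((n : ℝ) + 1) ^ 2

/-- The (non-normalized) Rogers dilogarithm `L(z) = Li₂(z) + (1/2) log z log (1 - z)`. -/
noncomputable def rogersL (z : ℝ) : ℝ := dilog z + 1 / 2 * Real.log z * Real.log (1 - z)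

lemma summable_inv_sq : Summable (fun n : ℕ => 1 / ((n : ℝ) + 1) ^ 2) := by
  have h : Summable (fun n : ℕ => 1 / (n : ℝ) ^ 2) :=
    Real.summable_one_div_nat_pow.mpr one_lt_two
  exact ((summable_nat_add_iff 1).2 h).congr fun n => by push_cast; ring

lemma norm_term_le {x : ℝ} (hx : |x| ≤ 1) (n : ℕ) :
    ‖x ^ (n + 1) / ((n : ℝ) + 1) ^ 2‖ ≤ 1 / ((n : ℝ) + 1) ^ 2 := by
  have hn : (0:ℝ) < ((n:ℝ)+1)^2 := by positivity
  rw [norm_div, norm_pow, Real.norm_eq_abs, Real.norm_eq_abs, abs_of_pos hn]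
  gcongr
  · exact pow_le_one₀ (abs_nonneg x) hx

lemma summable_dilog {x : ℝ} (hx : |x| ≤ 1) :
    Summable (fun n : ℕ => x ^ (n + 1) / ((n : ℝ) + 1) ^ 2) :=
  Summable.of_norm_bounded summable_inv_sq (norm_term_le hx)

lemma dilog_zero : dilog 0 = 0 := by simp [dilog]

lemma dilog_one : dilog 1 = Real.pi ^ 2 / 6 := by
  have h := hasSum_zeta_two
  have h2 : HasSum (fun n : ℕ => (1:ℝ) / ((n:ℝ) + 1) ^ 2) (Real.pi ^ 2 / 6) := by
    have := (hasSum_nat_add_iff (f := fun n : ℕ => (1:ℝ) / (n:ℝ) ^ 2) 1).mpr (by simpa using h)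
    exact this.congr_fun fun n => by push_cast; ring
  simpa [dilog] using h2.tsum_eq

lemma continuousOn_dilog : ContinuousOn dilog (Icc (-1 : ℝ) 1) := by
  apply continuousOn_tsum (u := fun n : ℕ => 1 / ((n : ℝ) + 1) ^ 2)
    (fun n => (continuous_pow (n+1)).continuousOn.div_const _) summable_inv_sq
  intro n x hx
  exact norm_term_le (abs_le.mpr ⟨hx.1, hx.2⟩) n

lemma hasDerivAt_dilog {x : ℝ} (hx : x ∈ Ioo (0:ℝ) 1) :
    HasDerivAt dilog (-Real.log (1 - x) / x) x := by
  obtain ⟨hx0, hx1⟩ := hx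
  set r : ℝ := (1 + x) / 2 with hr
  have hr0 : 0 < r := by positivity
  have hr1 : r < 1 := by simp only [hr]; linarith
  have hxr : x < r := by simp only [hr]; linarith
  have key : HasDerivAt (fun z : ℝ => ∑' n : ℕ, z ^ (n + 1) / ((n : ℝ) + 1) ^ 2)
      (∑' n : ℕ, x ^ n / ((n : ℝ) + 1)) x := by
    apply hasDerivAt_tsum_of_isPreconnected (u := fun n : ℕ => r ^ n)
      (summable_geometric_of_lt_one hr0.le hr1) (isOpen_Ioo (a := (-r)) (b := r))
      (convex_Ioo _ _).isPreconnected
      (g' := fun n y => y ^ n / ((n : ℝ) + 1))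
    · intro n y _
      have h := (hasDerivAt_pow (n + 1) y).div_const (((n : ℝ) + 1) ^ 2)
      refine h.congr_deriv ?_
      have hn : ((n : ℝ) + 1) ≠ 0 := by positivity
      push_cast
      field_simp
    · intro n y hy
      have hy' : |y| ≤ r := by
        rw [abs_le]; exact ⟨hy.1.le, hy.2.le⟩
      rw [norm_div, norm_pow, Real.norm_eq_abs, Real.norm_eq_abs,
        abs_of_pos (by positivity : (0:ℝ) < (n:ℝ)+1)]
      calc |y| ^ n / ((n:ℝ)+1) ≤ r ^ n / ((n:ℝ)+1) := by
            gcongr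
        _ ≤ r ^ n := div_le_self (by positivity) (by simp)
    · exact mem_Ioo.mpr ⟨by linarith, hxr⟩
    · exact summable_dilog (by rw [abs_of_pos hx0]; exact hx1.le)
    · exact mem_Ioo.mpr ⟨by linarith, hxr⟩
  have hsum : HasSum (fun n : ℕ => x ^ n / ((n : ℝ) + 1)) (-Real.log (1 - x) / x) := by
    have h := hasSum_pow_div_log_of_abs_lt_one
      (x := x) (by rw [abs_of_pos hx0]; exact hx1)
    have h2 := h.mul_left x⁻¹
    have he : (fun n : ℕ => x⁻¹ * (x ^ (n + 1) / ((n : ℝ) + 1)))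
        = fun n : ℕ => x ^ n / ((n : ℝ) + 1) := by
      funext n
      rw [pow_succ]
      field_simp
    rw [he] at h2
    have he2 : x⁻¹ * -Real.log (1 - x) = -Real.log (1 - x) / x := by
      rw [div_eq_mul_inv, mul_comm]
    rwa [he2] at h2
  show HasDerivAt (fun z : ℝ => ∑' n : ℕ, z ^ (n + 1) / ((n : ℝ) + 1) ^ 2) _ x
  rw [← hsum.tsum_eq]
  exact key

/-- The derivative of the Rogers dilogarithm. -/
noncomputable def rogersD (z : ℝ) : ℝ :=
  -(Real.log (1 - z) / z + Real.log z / (1 - z)) / 2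

lemma hasDerivAt_rogersL {z : ℝ} (hz : z ∈ Ioo (0:ℝ) 1) :
    HasDerivAt rogersL (rogersD z) z := by
  obtain ⟨h0, h1⟩ := hz
  have h1' : 0 < 1 - z := by linarith
  have hlog1 : HasDerivAt (fun z : ℝ => Real.log z) z⁻¹ z := Real.hasDerivAt_log (ne_of_gt h0)
  have hsub : HasDerivAt (fun z : ℝ => 1 - z) (-1) z := by
    simpa using (hasDerivAt_id z).const_sub 1
  have hlog2 : HasDerivAt (fun z : ℝ => Real.log (1 - z)) (-1 / (1 - z)) z := by
    simpa using hsub.log (ne_of_gt h1')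
  have hprod : HasDerivAt (fun z : ℝ => 1 / 2 * Real.log z * Real.log (1 - z))
      (1 / 2 * (z⁻¹ * Real.log (1 - z) + Real.log z * (-1 / (1 - z)))) z := by
    have := ((hlog1.const_mul (1/2 : ℝ)).mul hlog2)
    refine this.congr_deriv ?_
    ring
  have := (hasDerivAt_dilog ⟨h0, h1⟩).add hprod
  have heq : -Real.log (1 - z) / z + 1 / 2 * (z⁻¹ * Real.log (1 - z) +
      Real.log z * (-1 / (1 - z))) = rogersD z := by
    rw [rogersD]
    field_simp
    ring
  rw [heq] at this
  exact this

lemma neg_log_one_sub_le {x : ℝ} (h0 : 0 < x) (h2 : x ≤ 1/2) :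
    -Real.log (1 - x) ≤ 2 * x := by
  have h1 : 0 < 1 - x := by linarith
  rw [neg_le, ← Real.log_exp (-(2*x)), Real.log_le_log_iff (Real.exp_pos _) h1]
  have he : 1 + 2*x ≤ Real.exp (2*x) := by
    have := Real.add_one_le_exp (2*x); linarith
  have hpos : 0 < Real.exp (2*x) := Real.exp_pos _
  rw [Real.exp_neg, inv_le_iff_one_le_mul₀ hpos]
  nlinarith

lemma tendsto_log_mul_log : Tendsto (fun x => Real.log x * Real.log (1 - x)) (𝓝[>] (0:ℝ)) (𝓝 0) := by
  have hx : Tendsto (fun x : ℝ => Real.log x * x) (𝓝[>] (0:ℝ)) (𝓝 0) := by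
    simpa only [Real.rpow_one] using tendsto_log_mul_rpow_nhdsGT_zero zero_lt_one
  have hg : Tendsto (fun x : ℝ => 2 * |Real.log x * x|) (𝓝[>] (0:ℝ)) (𝓝 0) := by
    simpa using (hx.abs.const_mul 2)
  apply squeeze_zero_norm' _ hg
  filter_upwards [Ioo_mem_nhdsGT_of_mem (by norm_num : (0:ℝ) ∈ Ico 0 (1/2:ℝ))] with x hx'
  obtain ⟨hx0, hx2⟩ := hx'
  have h1 : 0 < 1 - x := by linarith
  have hb : |Real.log (1 - x)| ≤ 2 * x := by
    rw [abs_of_nonpos (Real.log_nonpos (by linarith) (by linarith))]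
    exact neg_log_one_sub_le hx0 hx2.le
  rw [Real.norm_eq_abs, abs_mul]
  calc |Real.log x| * |Real.log (1-x)| ≤ |Real.log x| * (2*x) := by
        gcongr
    _ = 2 * |Real.log x * x| := by
        rw [abs_mul, abs_of_pos hx0]; ring

lemma tendsto_rogersL_zero : Tendsto rogersL (𝓝[>] (0:ℝ)) (𝓝 0) := by
  have hmem : Icc (-1:ℝ) 1 ∈ 𝓝[>] (0:ℝ) :=
    mem_of_superset (Ioo_mem_nhdsGT_of_mem (by norm_num : (0:ℝ) ∈ Ico 0 (1:ℝ)))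
      (fun y hy => ⟨by linarith [hy.1], hy.2.le⟩)
  have hd : Tendsto dilog (𝓝[>] (0:ℝ)) (𝓝 0) := by
    have := (continuousOn_dilog 0 (by norm_num)).tendsto
    rw [dilog_zero] at this
    exact this.mono_left (nhdsWithin_le_iff.mpr hmem)
  have hl : Tendsto (fun x => 1/2 * Real.log x * Real.log (1 - x)) (𝓝[>] (0:ℝ)) (𝓝 0) := by
    have := tendsto_log_mul_log.const_mul (1/2 : ℝ)
    simpa [mul_assoc] using this
  have h := hd.add hl
  rw [add_zero] at h
  exact h

lemma tendsto_rogersL_one : Tendsto rogersL (𝓝[<] (1:ℝ)) (𝓝 (Real.pi ^ 2 / 6)) := by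
  have hmem : Icc (-1:ℝ) 1 ∈ 𝓝[<] (1:ℝ) :=
    mem_of_superset (Ioo_mem_nhdsLT_of_mem (by norm_num : (1:ℝ) ∈ Ioc 0 (1:ℝ)))
      (fun y hy => ⟨by linarith [hy.1], hy.2.le⟩)
  have hd : Tendsto dilog (𝓝[<] (1:ℝ)) (𝓝 (Real.pi ^ 2 / 6)) := by
    have := (continuousOn_dilog 1 (by norm_num)).tendsto
    rw [dilog_one] at this
    exact this.mono_left (nhdsWithin_le_iff.mpr hmem)
  have hφ : Tendsto (fun x : ℝ => 1 - x) (𝓝[<] (1:ℝ)) (𝓝[>] (0:ℝ)) := by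
    apply tendsto_nhdsWithin_of_tendsto_nhds_of_eventually_within
    · have hc : Continuous (fun x : ℝ => 1 - x) := by fun_prop
      have h2 : Tendsto (fun x : ℝ => 1 - x) (𝓝 (1:ℝ)) (𝓝 ((1:ℝ) - 1)) := hc.tendsto 1
      norm_num at h2
      exact h2.mono_left nhdsWithin_le_nhds
    · filter_upwards [self_mem_nhdsWithin] with y hy
      simpa using hy
  have hl : Tendsto (fun x => 1/2 * Real.log x * Real.log (1 - x)) (𝓝[<] (1:ℝ)) (𝓝 0) := by
    have hcomp := tendsto_log_mul_log.comp hφ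
    have : (fun x => Real.log (1-x) * Real.log (1 - (1-x))) = fun x => Real.log (1-x) * Real.log x := by
      funext x; norm_num
    rw [Function.comp_def, this] at hcomp
    have h2 := hcomp.const_mul (1/2 : ℝ)
    simp only [mul_zero] at h2
    apply h2.congr
    intro x
    ring
  have := hd.add hl
  rw [add_zero] at this
  exact this.congr (fun x => rfl)

/-- A function with zero derivative on `Ioo 0 1` is constant there. -/
lemma const_of_deriv_zero {f : ℝ → ℝ} (hf : ∀ x ∈ Ioo (0:ℝ) 1, HasDerivAt f 0 x)
    {x y : ℝ} (hx : x ∈ Ioo (0:ℝ) 1) (hy : y ∈ Ioo (0:ℝ) 1) : f x = f y := by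
  wlog hxy : x ≤ y generalizing x y
  · exact (this hy hx (le_of_not_ge hxy)).symm
  have hsub : Icc x y ⊆ Ioo (0:ℝ) 1 := fun z hz => ⟨lt_of_lt_of_le hx.1 hz.1, lt_of_le_of_lt hz.2 hy.2⟩
  have := constant_of_has_deriv_right_zero (f := f) (a := x) (b := y)
    (fun z hz => ((hf z (hsub hz)).continuousAt).continuousWithinAt)
    (fun z hz => ((hf z (hsub ⟨hz.1, hz.2.le⟩)).hasDerivWithinAt))
  exact (this y ⟨hxy, le_refl y⟩).symm

/-- If additionally `f` tends to `c` at `0⁺`, then `f = c` on `Ioo 0 1`. -/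
lemma eq_of_deriv_zero_of_tendsto {f : ℝ → ℝ} {c : ℝ}
    (hf : ∀ x ∈ Ioo (0:ℝ) 1, HasDerivAt f 0 x)
    (hlim : Tendsto f (𝓝[>] (0:ℝ)) (𝓝 c)) {x : ℝ} (hx : x ∈ Ioo (0:ℝ) 1) : f x = c := by
  have hIoo : Ioo (0:ℝ) 1 ∈ 𝓝[>] (0:ℝ) :=
    Ioo_mem_nhdsGT_of_mem (by norm_num : (0:ℝ) ∈ Ico (0:ℝ) 1)
  have hev : f =ᶠ[𝓝[>] (0:ℝ)] fun _ => f x := by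
    filter_upwards [hIoo] with y hy
    exact const_of_deriv_zero hf hy hx
  have h2 : Tendsto (fun _ : ℝ => f x) (𝓝[>] (0:ℝ)) (𝓝 c) := hlim.congr' hev
  exact tendsto_nhds_unique tendsto_const_nhds h2

/-- Euler's reflection formula for the Rogers dilogarithm. -/
theorem rogersL_reflection {x : ℝ} (hx : x ∈ Ioo (0:ℝ) 1) :
    rogersL x + rogersL (1 - x) = Real.pi ^ 2 / 6 := by
  have key : ∀ z ∈ Ioo (0:ℝ) 1, HasDerivAt (fun x => rogersL x + rogersL (1 - x)) 0 z := by
    intro z hz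
    have hz' : 1 - z ∈ Ioo (0:ℝ) 1 := ⟨by linarith [hz.2], by linarith [hz.1]⟩
    have hsub : HasDerivAt (fun x : ℝ => 1 - x) (-1) z := by
      simpa using (hasDerivAt_id z).const_sub 1
    have h2 : HasDerivAt (fun x : ℝ => rogersL (1 - x)) (rogersD (1 - z) * (-1)) z :=
      (hasDerivAt_rogersL hz').comp z hsub
    have h := (hasDerivAt_rogersL hz).add h2
    have heq : rogersD z + rogersD (1 - z) * (-1) = 0 := by
      rw [rogersD, rogersD]
      have : (1:ℝ) - (1 - z) = z := by ring
      rw [this]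
      ring
    rwa [heq] at h
  have hlim : Tendsto (fun x => rogersL x + rogersL (1 - x)) (𝓝[>] (0:ℝ))
      (𝓝 (0 + Real.pi ^ 2 / 6)) := by
    apply Tendsto.add tendsto_rogersL_zero
    have hφ : Tendsto (fun x : ℝ => 1 - x) (𝓝[>] (0:ℝ)) (𝓝[<] (1:ℝ)) := by
      apply tendsto_nhdsWithin_of_tendsto_nhds_of_eventually_within
      · have hc : Continuous (fun x : ℝ => 1 - x) := by fun_prop
        have h2 : Tendsto (fun x : ℝ => 1 - x) (𝓝 (0:ℝ)) (𝓝 ((1:ℝ) - 0)) := hc.tendsto 0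
        norm_num at h2
        exact h2.mono_left nhdsWithin_le_nhds
      · filter_upwards [self_mem_nhdsWithin] with y hy
        simp only [mem_Iio]
        linarith [mem_Ioi.mp hy]
    exact tendsto_rogersL_one.comp hφ
  have := eq_of_deriv_zero_of_tendsto key hlim hx
  rwa [zero_add] at this

lemma key_identity {x : ℝ} (hx : x ∈ Ioo (0:ℝ) 1) :
    rogersD (x^2) * (2*x) + rogersD x
      - (rogersD (x^3) * (3*x^2)
        + rogersD (x^2/(1+x+x^2)) * (x*(2+x)/(1+x+x^2)^2)
        + rogersD (x*(1+x)/(1+x+x^2)) * ((1+2*x)/(1+x+x^2)^2)) = 0 := by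
  obtain ⟨hx0, hx1⟩ := hx
  have h1x : (0:ℝ) < 1 - x := by linarith
  have hpx : (0:ℝ) < 1 + x := by linarith
  have hA : (0:ℝ) < 1 + x + x^2 := by positivity
  simp only [rogersD]
  rw [show (1:ℝ) - x^2/(1+x+x^2) = (1+x)/(1+x+x^2) by field_simp; ring,
      show (1:ℝ) - x*(1+x)/(1+x+x^2) = 1/(1+x+x^2) by field_simp; ring,
      show (1:ℝ) - x^2 = (1-x)*(1+x) by ring,
      show (1:ℝ) - x^3 = (1-x)*(1+x+x^2) by ring,
      Real.log_div (pow_ne_zero 2 hx0.ne') hA.ne',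
      Real.log_div hpx.ne' hA.ne',
      Real.log_div (mul_ne_zero hx0.ne' hpx.ne') hA.ne',
      Real.log_div one_ne_zero hA.ne',
      Real.log_mul h1x.ne' hpx.ne',
      Real.log_mul h1x.ne' hA.ne',
      Real.log_mul hx0.ne' hpx.ne',
      Real.log_pow, Real.log_pow, Real.log_one]
  push_cast
  field_simp
  ring

theorem rogersL_abel {x : ℝ} (hx : x ∈ Ioo (0:ℝ) 1) :
    rogersL (x^2) + rogersL x
      - (rogersL (x^3) + rogersL (x^2/(1+x+x^2)) + rogersL (x*(1+x)/(1+x+x^2))) = 0 := by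
  apply eq_of_deriv_zero_of_tendsto (f := fun x => rogersL (x^2) + rogersL x
      - (rogersL (x^3) + rogersL (x^2/(1+x+x^2)) + rogersL (x*(1+x)/(1+x+x^2)))) _ _ hx
  · -- derivative zero
    intro z hz
    obtain ⟨hz0, hz1⟩ := hz
    have hA : (0:ℝ) < 1 + z + z^2 := by positivity
    have hm2 : z^2 ∈ Ioo (0:ℝ) 1 := ⟨by positivity, by nlinarith⟩
    have hm3 : z^3 ∈ Ioo (0:ℝ) 1 := ⟨by positivity, by nlinarith⟩
    have hm4 : z^2/(1+z+z^2) ∈ Ioo (0:ℝ) 1 :=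
      ⟨by positivity, (div_lt_one hA).mpr (by nlinarith)⟩
    have hm5 : z*(1+z)/(1+z+z^2) ∈ Ioo (0:ℝ) 1 :=
      ⟨by positivity, (div_lt_one hA).mpr (by nlinarith)⟩
    have hp2 : HasDerivAt (fun x : ℝ => x^2) (2*z) z := by
      simpa using hasDerivAt_pow 2 z
    have hp3 : HasDerivAt (fun x : ℝ => x^3) (3*z^2) z := by
      simpa using hasDerivAt_pow 3 z
    have hpA : HasDerivAt (fun x : ℝ => 1+x+x^2) (1+2*z) z := by
      have h1 : HasDerivAt (fun x : ℝ => 1+x) 1 z := (hasDerivAt_id z).const_add 1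
      have h := h1.add (hasDerivAt_pow 2 z)
      simp only [Nat.cast_ofNat, pow_one] at h
      refine h.congr_deriv ?_
      push_cast
      ring
    have hp4 : HasDerivAt (fun x : ℝ => x^2/(1+x+x^2)) (z*(2+z)/(1+z+z^2)^2) z := by
      have := hp2.div hpA hA.ne'
      refine this.congr_deriv ?_
      field_simp
      ring
    have hp5 : HasDerivAt (fun x : ℝ => x*(1+x)/(1+x+x^2)) ((1+2*z)/(1+z+z^2)^2) z := by
      have hnum : HasDerivAt (fun x : ℝ => x*(1+x)) (1+2*z) z := by
        have h := (hasDerivAt_id z).mul ((hasDerivAt_id z).const_add 1)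
        simp only [id_eq, one_mul, mul_one] at h
        refine h.congr_deriv ?_
        ring
      have := hnum.div hpA hA.ne'
      refine this.congr_deriv ?_
      field_simp
      ring
    have c2 : HasDerivAt (fun x : ℝ => rogersL (x^2)) (rogersD (z^2) * (2*z)) z :=
      HasDerivAt.comp (h₂ := rogersL) (h := fun x : ℝ => x^2) z (hasDerivAt_rogersL hm2) hp2
    have c1 : HasDerivAt rogersL (rogersD z) z := hasDerivAt_rogersL ⟨hz0, hz1⟩
    have c3 : HasDerivAt (fun x : ℝ => rogersL (x^3)) (rogersD (z^3) * (3*z^2)) z :=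
      HasDerivAt.comp (h₂ := rogersL) (h := fun x : ℝ => x^3) z (hasDerivAt_rogersL hm3) hp3
    have c4 : HasDerivAt (fun x : ℝ => rogersL (x^2/(1+x+x^2)))
        (rogersD (z^2/(1+z+z^2)) * (z*(2+z)/(1+z+z^2)^2)) z :=
      HasDerivAt.comp (h₂ := rogersL) (h := fun x : ℝ => x^2/(1+x+x^2)) z (hasDerivAt_rogersL hm4) hp4
    have c5 : HasDerivAt (fun x : ℝ => rogersL (x*(1+x)/(1+x+x^2)))
        (rogersD (z*(1+z)/(1+z+z^2)) * ((1+2*z)/(1+z+z^2)^2)) z :=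
      HasDerivAt.comp (h₂ := rogersL) (h := fun x : ℝ => x*(1+x)/(1+x+x^2)) z (hasDerivAt_rogersL hm5) hp5
    have htot := (c2.add c1).sub ((c3.add c4).add c5)
    have hkey := key_identity ⟨hz0, hz1⟩
    rw [hkey] at htot
    exact htot
  · -- limit at 0⁺
    have hz := tendsto_rogersL_zero
    have comp : ∀ u : ℝ → ℝ, Tendsto u (𝓝[>] (0:ℝ)) (𝓝[>] (0:ℝ)) →
        Tendsto (fun x => rogersL (u x)) (𝓝[>] (0:ℝ)) (𝓝 0) := fun u hu => hz.comp hu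
    have t2 : Tendsto (fun x : ℝ => x^2) (𝓝[>] (0:ℝ)) (𝓝[>] (0:ℝ)) := by
      apply tendsto_nhdsWithin_of_tendsto_nhds_of_eventually_within
      · have h2 : Tendsto (fun x : ℝ => x^2) (𝓝 (0:ℝ)) (𝓝 ((0:ℝ)^2)) :=
          (continuous_pow 2).tendsto 0
        norm_num at h2
        exact h2.mono_left nhdsWithin_le_nhds
      · filter_upwards [self_mem_nhdsWithin] with y hy
        have : (0:ℝ) < y := hy
        exact mem_Ioi.mpr (by positivity)
    have t3 : Tendsto (fun x : ℝ => x^3) (𝓝[>] (0:ℝ)) (𝓝[>] (0:ℝ)) := by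
      apply tendsto_nhdsWithin_of_tendsto_nhds_of_eventually_within
      · have h2 : Tendsto (fun x : ℝ => x^3) (𝓝 (0:ℝ)) (𝓝 ((0:ℝ)^3)) :=
          (continuous_pow 3).tendsto 0
        norm_num at h2
        exact h2.mono_left nhdsWithin_le_nhds
      · filter_upwards [self_mem_nhdsWithin] with y hy
        have : (0:ℝ) < y := hy
        exact mem_Ioi.mpr (by positivity)
    have hcont4 : ContinuousAt (fun x : ℝ => x^2/(1+x+x^2)) 0 := by
      apply ContinuousAt.div (by fun_prop) (by fun_prop)
      norm_num
    have hcont5 : ContinuousAt (fun x : ℝ => x*(1+x)/(1+x+x^2)) 0 := by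
      apply ContinuousAt.div (by fun_prop) (by fun_prop)
      norm_num
    have t4 : Tendsto (fun x : ℝ => x^2/(1+x+x^2)) (𝓝[>] (0:ℝ)) (𝓝[>] (0:ℝ)) := by
      apply tendsto_nhdsWithin_of_tendsto_nhds_of_eventually_within
      · have h2 := hcont4.tendsto
        norm_num at h2
        exact h2.mono_left nhdsWithin_le_nhds
      · filter_upwards [self_mem_nhdsWithin] with y hy
        have hy' : (0:ℝ) < y := hy
        have : (0:ℝ) < 1 + y + y^2 := by positivity
        exact mem_Ioi.mpr (div_pos (by positivity) this)
    have t5 : Tendsto (fun x : ℝ => x*(1+x)/(1+x+x^2)) (𝓝[>] (0:ℝ)) (𝓝[>] (0:ℝ)) := by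
      apply tendsto_nhdsWithin_of_tendsto_nhds_of_eventually_within
      · have h2 := hcont5.tendsto
        norm_num at h2
        exact h2.mono_left nhdsWithin_le_nhds
      · filter_upwards [self_mem_nhdsWithin] with y hy
        have hy' : (0:ℝ) < y := hy
        have h1 : (0:ℝ) < 1 + y + y^2 := by positivity
        exact mem_Ioi.mpr (div_pos (by positivity) h1)
    have t1 : Tendsto rogersL (𝓝[>] (0:ℝ)) (𝓝 0) := hz
    have := ((comp _ t2).add t1).sub (((comp _ t3).add (comp _ t4)).add (comp _ t5))
    norm_num at this
    exact this


/-- Lewin's two-term ladder for the reciprocal of the plastic constant: if `ρ ∈ (0,1)`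
satisfies `1 − ρ² = ρ³`, then `L(ρ²) + 2·L(ρ) = π²/3`. -/
theorem lewin_plastic_ladder (ρ : ℝ) (h0 : 0 < ρ) (h1 : ρ < 1)
    (hρ : 1 - ρ ^ 2 = ρ ^ 3) :
    rogersL (ρ ^ 2) + 2 * rogersL ρ = Real.pi ^ 2 / 3 := by
  have hm : ρ ∈ Ioo (0:ℝ) 1 := ⟨h0, h1⟩
  have hm2 : ρ ^ 2 ∈ Ioo (0:ℝ) 1 := ⟨by positivity, by nlinarith⟩
  have hA : (0:ℝ) < 1 + ρ + ρ ^ 2 := by positivity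
  have habel := rogersL_abel hm
  have e1 : ρ ^ 2 / (1 + ρ + ρ ^ 2) = 1 - ρ := by
    rw [div_eq_iff hA.ne']
    nlinarith [hρ]
  have e2 : ρ * (1 + ρ) / (1 + ρ + ρ ^ 2) = ρ ^ 2 := by
    rw [div_eq_iff hA.ne']
    nlinarith [hρ]
  rw [e1, e2] at habel
  have hrefl1 := rogersL_reflection hm
  have hrefl2 := rogersL_reflection hm2
  rw [hρ] at hrefl2
  linarith
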